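/- Let X be a σ_{C(X)}-β-defavorable space, K a space such that K × K is pseudocompact, and f : X × K → ℝ a separately continuous map. Suppose that every pseudocompact subspace of C_p(X) is relatively countably compact in C_p(X). Then there is a dense Gδ subset R of X such that f is jointly continuous at each point of R × K. -/

import Mathlib

open Set Topology Filter

namespace SepJoint

/-- The list `[f 0, …, f (n-1)]` of the first `n` values of a sequence. -/
def hist {A : Type*} (f : ℕ → A) (n : ℕ) : List A := List.ofFn (fun i : Fin n => f i)

variable (X : Type*) [TopologicalSpace X]

/-- A strategy for player β in games of type `𝒥` (with points): from the list of α's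
previous moves `(Uᵢ, aᵢ)`, produce β's next open set `Vₙ`. -/
abbrev BetaStrategy := List (Set X × X) → Set X

/-- A strategy for player α in games of type `𝒥`: from the list `[V₀, …, Vₙ]` of β's moves
(the last being the one to respond to), produce α's move `(Uₙ, aₙ)`. -/
abbrev AlphaStrategy := List (Set X) → Set X × X

/-- A strategy for player β in games of type `𝒥*`: from the list of α's previous
moves `Uᵢ`, produce β's next open set `Vₙ`. -/
abbrev BetaStrategyStar := List (Set X) → Set X

/-- A strategy for player α in games of type `𝒥*`. -/
abbrev AlphaStrategyStar := List (Set X) → Set X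

variable {X}

/-! ### Games of type `𝒥` (α plays pairs `(Uₙ, aₙ)`) -/

/-- α has played legally against the β-strategy `σ` at all stages `< n`:
each `Uᵢ` is a nonempty open subset of β's move `Vᵢ = σ(history)`. -/
def AlphaLegal (σ : BetaStrategy X) (U : ℕ → Set X) (a : ℕ → X) (n : ℕ) : Prop :=
  ∀ i < n, IsOpen (U i) ∧ (U i).Nonempty ∧ U i ⊆ σ (hist (fun j => (U j, a j)) i)

/-- `σ` is a legal strategy for β: against any legal finite history it produces a nonempty
open set contained in α's previous move. -/
def BetaLegal (σ : BetaStrategy X) : Prop :=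
  ∀ (U : ℕ → Set X) (a : ℕ → X) (n : ℕ), AlphaLegal σ U a n →
    IsOpen (σ (hist (fun j => (U j, a j)) n)) ∧
    (σ (hist (fun j => (U j, a j)) n)).Nonempty ∧
    ∀ m, n = m + 1 → σ (hist (fun j => (U j, a j)) n) ⊆ U m

/-- The winning condition for α in the game `𝒥_Γ` on the play with moves `(Uₙ, aₙ)`:
for each `g ∈ Γ` there is `t ∈ ⋂ₙ Uₙ` with `g t` in the closure of `{g (aₙ) : n}`. -/
def AlphaWinsGamma (Γ : Set (X → ℝ)) (U : ℕ → Set X) (a : ℕ → X) : Prop :=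
  ∀ g ∈ Γ, ∃ t ∈ (⋂ n, U n), g t ∈ closure (Set.range fun n => g (a n))

/-- The winning condition for α in the game `𝒥` on the play with moves `(Uₙ, aₙ)`:
`(⋂ₙ Uₙ) ∩ closure {aₙ : n} ≠ ∅`. -/
def AlphaWinsPlain (U : ℕ → Set X) (a : ℕ → X) : Prop :=
  ((⋂ n, U n) ∩ closure (Set.range a)).Nonempty

/-- `σ` is a winning strategy for β in the game `𝒥_Γ`. -/
def BetaWinningGamma (Γ : Set (X → ℝ)) (σ : BetaStrategy X) : Prop :=
  BetaLegal σ ∧ ∀ U a, (∀ n, AlphaLegal σ U a n) → ¬ AlphaWinsGamma Γ U a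

/-- `σ` is a winning strategy for β in the game `𝒥`. -/
def BetaWinningPlain (σ : BetaStrategy X) : Prop :=
  BetaLegal σ ∧ ∀ U a, (∀ n, AlphaLegal σ U a n) → ¬ AlphaWinsPlain U a

/-- `X` is σ_Γ-β-defavorable: β has no winning strategy in the game `𝒥_Γ`. -/
def SigmaGammaBetaDefavorable (X : Type*) [TopologicalSpace X] (Γ : Set (X → ℝ)) : Prop :=
  ¬ ∃ σ : BetaStrategy X, BetaWinningGamma Γ σ

/-- `X` is σ-β-defavorable: β has no winning strategy in the game `𝒥`. -/
def SigmaBetaDefavorable (X : Type*) [TopologicalSpace X] : Prop :=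
  ¬ ∃ σ : BetaStrategy X, BetaWinningPlain σ

/-- Given the α-strategy `τ` and β's moves `V`, α's `n`-th move `(Uₙ, aₙ) = τ [V₀, …, Vₙ]`. -/
def alphaMove (τ : AlphaStrategy X) (V : ℕ → Set X) (n : ℕ) : Set X × X :=
  τ (hist V (n + 1))

/-- `τ` is a legal strategy for α: along any legal history of β-moves it answers with a
nonempty open subset of β's last move. -/
def AlphaStratLegal (τ : AlphaStrategy X) : Prop :=
  ∀ (V : ℕ → Set X) (n : ℕ), (IsOpen (V 0) ∧ (V 0).Nonempty) →
    (∀ i < n, IsOpen (V (i + 1)) ∧ (V (i + 1)).Nonempty ∧ V (i + 1) ⊆ (alphaMove τ V i).1) →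
    IsOpen (alphaMove τ V n).1 ∧ (alphaMove τ V n).1.Nonempty ∧ (alphaMove τ V n).1 ⊆ V n

/-- `V` is a full run of legal moves of β against the α-strategy `τ`. -/
def BetaLegalRun (τ : AlphaStrategy X) (V : ℕ → Set X) : Prop :=
  IsOpen (V 0) ∧ (V 0).Nonempty ∧
    ∀ n, IsOpen (V (n + 1)) ∧ (V (n + 1)).Nonempty ∧ V (n + 1) ⊆ (alphaMove τ V n).1

/-- `τ` is a conditionally winning strategy for α in the game `𝒥_Γ`: every compatible play
with `⋂ₙ Uₙ ≠ ∅` fulfils the winning condition for α. -/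
def CondAlphaWinningGamma (Γ : Set (X → ℝ)) (τ : AlphaStrategy X) : Prop :=
  AlphaStratLegal τ ∧
    ∀ V, BetaLegalRun τ V → (⋂ n, (alphaMove τ V n).1).Nonempty →
      AlphaWinsGamma Γ (fun n => (alphaMove τ V n).1) (fun n => (alphaMove τ V n).2)

/-- `X` is conditionally σ_Γ-α-favorable. -/
def CondSigmaGammaAlphaFavorable (X : Type*) [TopologicalSpace X] (Γ : Set (X → ℝ)) : Prop :=
  ∃ τ : AlphaStrategy X, CondAlphaWinningGamma Γ τ

/-- `τ` is a conditionally winning strategy for α in the game `𝒥`. -/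
def CondAlphaWinningPlain (τ : AlphaStrategy X) : Prop :=
  AlphaStratLegal τ ∧
    ∀ V, BetaLegalRun τ V → (⋂ n, (alphaMove τ V n).1).Nonempty →
      AlphaWinsPlain (fun n => (alphaMove τ V n).1) (fun n => (alphaMove τ V n).2)

/-- `X` is conditionally σ-α-favorable. -/
def CondSigmaAlphaFavorable (X : Type*) [TopologicalSpace X] : Prop :=
  ∃ τ : AlphaStrategy X, CondAlphaWinningPlain τ

/-! ### Games of type `𝒥*` (α plays only open sets) -/

/-- α has played legally against the β-strategy `σ` in `𝒥*` at all stages `< n`. -/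
def AlphaLegalStar (σ : BetaStrategyStar X) (U : ℕ → Set X) (n : ℕ) : Prop :=
  ∀ i < n, IsOpen (U i) ∧ (U i).Nonempty ∧ U i ⊆ σ (hist U i)

/-- `σ` is a legal strategy for β in `𝒥*`. -/
def BetaLegalStar (σ : BetaStrategyStar X) : Prop :=
  ∀ (U : ℕ → Set X) (n : ℕ), AlphaLegalStar σ U n →
    IsOpen (σ (hist U n)) ∧ (σ (hist U n)).Nonempty ∧ ∀ m, n = m + 1 → σ (hist U n) ⊆ U m

/-- The winning condition for α in the game `𝒥*_Γ` on the play with α-moves `Uₙ`: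
for every sequence `(aₙ)` with `aₙ ∈ Uₙ` and every `g ∈ Γ`, there is `t ∈ ⋂ₙ Uₙ` with
`g t` in the closure of `{g (aₙ) : n}`. -/
def AlphaWinsStar (Γ : Set (X → ℝ)) (U : ℕ → Set X) : Prop :=
  ∀ a : ℕ → X, (∀ n, a n ∈ U n) → ∀ g ∈ Γ,
    ∃ t ∈ (⋂ n, U n), g t ∈ closure (Set.range fun n => g (a n))

/-- `σ` is a winning strategy for β in the game `𝒥*_Γ`. -/
def BetaWinningStar (Γ : Set (X → ℝ)) (σ : BetaStrategyStar X) : Prop :=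
  BetaLegalStar σ ∧ ∀ U, (∀ n, AlphaLegalStar σ U n) → ¬ AlphaWinsStar Γ U

/-- `X` is σ*_Γ-β-defavorable: β has no winning strategy in `𝒥*_Γ`. -/
def SigmaStarBetaDefavorable (X : Type*) [TopologicalSpace X] (Γ : Set (X → ℝ)) : Prop :=
  ¬ ∃ σ : BetaStrategyStar X, BetaWinningStar Γ σ

/-- Given the α-strategy `τ` and β's moves `V`, α's `n`-th move `Uₙ = τ [V₀, …, Vₙ]` in `𝒥*`. -/
def alphaMoveStar (τ : AlphaStrategyStar X) (V : ℕ → Set X) (n : ℕ) : Set X :=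
  τ (hist V (n + 1))

/-- `τ` is a legal strategy for α in `𝒥*`. -/
def AlphaStratLegalStar (τ : AlphaStrategyStar X) : Prop :=
  ∀ (V : ℕ → Set X) (n : ℕ), (IsOpen (V 0) ∧ (V 0).Nonempty) →
    (∀ i < n, IsOpen (V (i + 1)) ∧ (V (i + 1)).Nonempty ∧ V (i + 1) ⊆ alphaMoveStar τ V i) →
    IsOpen (alphaMoveStar τ V n) ∧ (alphaMoveStar τ V n).Nonempty ∧ alphaMoveStar τ V n ⊆ V n

/-- `V` is a full run of legal moves of β against the α-strategy `τ` in `𝒥*`. -/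
def BetaLegalRunStar (τ : AlphaStrategyStar X) (V : ℕ → Set X) : Prop :=
  IsOpen (V 0) ∧ (V 0).Nonempty ∧
    ∀ n, IsOpen (V (n + 1)) ∧ (V (n + 1)).Nonempty ∧ V (n + 1) ⊆ alphaMoveStar τ V n

/-- `τ` is a winning strategy for α in the game `𝒥*_Γ`. -/
def AlphaWinningStar (Γ : Set (X → ℝ)) (τ : AlphaStrategyStar X) : Prop :=
  AlphaStratLegalStar τ ∧
    ∀ V, BetaLegalRunStar τ V → AlphaWinsStar Γ (fun n => alphaMoveStar τ V n)

/-- `τ` is a conditionally winning strategy for α in the game `𝒥*_Γ`. -/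
def CondAlphaWinningStar (Γ : Set (X → ℝ)) (τ : AlphaStrategyStar X) : Prop :=
  AlphaStratLegalStar τ ∧
    ∀ V, BetaLegalRunStar τ V → (⋂ n, alphaMoveStar τ V n).Nonempty →
      AlphaWinsStar Γ (fun n => alphaMoveStar τ V n)

/-- `X` is σ*_Γ-α-favorable. -/
def SigmaStarAlphaFavorable (X : Type*) [TopologicalSpace X] (Γ : Set (X → ℝ)) : Prop :=
  ∃ τ : AlphaStrategyStar X, AlphaWinningStar Γ τ

/-- `X` is conditionally σ*_Γ-α-favorable. -/
def CondSigmaStarAlphaFavorable (X : Type*) [TopologicalSpace X] (Γ : Set (X → ℝ)) : Prop :=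
  ∃ τ : AlphaStrategyStar X, CondAlphaWinningStar Γ τ

/-! ### Auxiliary notions -/

/-- `f : X × K → ℝ` is separately continuous. -/
def SeparatelyContinuous {K : Type*} [TopologicalSpace K] (f : X × K → ℝ) : Prop :=
  (∀ x, Continuous fun y => f (x, y)) ∧ (∀ y, Continuous fun x => f (x, y))

/-- The map `φ : K → ℝ^X`, `φ(y)(x) = f(x, y)`. -/
def phi {X K : Type*} (f : X × K → ℝ) (y : K) : X → ℝ := fun x => f (x, y)

/-- A sequence `(Wₙ)` of subsets of `K` is countably pair complete with respect to `(φ, Γ)`: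
for all sequences `yₙ, zₙ ∈ Wₙ`, the sequence `φ(yₙ) - φ(zₙ)` has a cluster point in `Γ`
(`ℝ^X` carrying the product, i.e. pointwise convergence, topology). -/
def PairComplete {K : Type*} (f : X × K → ℝ) (Γ : Set (X → ℝ)) (W : ℕ → Set K) : Prop :=
  ∀ y z : ℕ → K, (∀ n, y n ∈ W n) → (∀ n, z n ∈ W n) →
    ∃ g ∈ Γ, MapClusterPt g atTop (fun n => phi f (y n) - phi f (z n))

/-- `f` is ε-continuous at `p`. -/
def EpsCont {K : Type*} [TopologicalSpace K] (f : X × K → ℝ) (ε : ℝ) (p : X × K) : Prop :=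
  ∃ O ∈ 𝓝 p, ∀ q ∈ O, |f p - f q| < ε

/-- `Y` is a bounded subset of `Z`: every continuous real-valued function on `Z`
is bounded on `Y`. -/
def BoundedIn {Z : Type*} [TopologicalSpace Z] (Y : Set Z) : Prop :=
  ∀ g : Z → ℝ, Continuous g → ∃ M, ∀ y ∈ Y, |g y| ≤ M

/-- `Y` is relatively countably compact in `Z`: every sequence in `Y` has a cluster
point in `Z`. -/
def RelCountablyCompact {Z : Type*} [TopologicalSpace Z] (Y : Set Z) : Prop :=
  ∀ u : ℕ → Z, (∀ n, u n ∈ Y) → ∃ z : Z, MapClusterPt z atTop u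

/-- `K` is pseudocompact: Tychonoff and every continuous real-valued function is bounded. -/
def Pseudocompact (K : Type*) [TopologicalSpace K] : Prop :=
  T35Space K ∧ BoundedIn (Set.univ : Set K)

/-- `Y` is Čech-complete: Tychonoff, and there is a sequence of open covers of `Y` which is
complete: any filter base of nonempty closed sets, containing for each `n` a set included
in a member of the `n`-th cover, has nonempty intersection. -/
def CechComplete (Y : Type*) [TopologicalSpace Y] : Prop :=
  T35Space Y ∧ ∃ 𝒰 : ℕ → Set (Set Y),
    (∀ n, ∀ U ∈ 𝒰 n, IsOpen U) ∧ (∀ n, ⋃₀ 𝒰 n = Set.univ) ∧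
    ∀ ℱ : Set (Set Y),
      (∀ F ∈ ℱ, IsClosed F) → ℱ.Nonempty → (∀ F ∈ ℱ, F.Nonempty) →
      (∀ F₁ ∈ ℱ, ∀ F₂ ∈ ℱ, ∃ F₃ ∈ ℱ, F₃ ⊆ F₁ ∩ F₂) →
      (∀ n, ∃ F ∈ ℱ, ∃ U ∈ 𝒰 n, F ⊆ U) →
      (⋂₀ ℱ).Nonempty

/-- `Y` is a p-space: Tychonoff, and there is a sequence `(𝒰ₙ)` of open covers of `Y` such
that each `x ∈ Y` has a sequence `Uₙ ∈ 𝒰ₙ` of members containing it whose intersection is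
compact and for which `(⋂_{i ≤ n} Uᵢ)ₙ` is an outer base of `⋂ₙ Uₙ`. -/
def PSpace (Y : Type*) [TopologicalSpace Y] : Prop :=
  T35Space Y ∧ ∃ 𝒰 : ℕ → Set (Set Y),
    (∀ n, ∀ U ∈ 𝒰 n, IsOpen U) ∧ (∀ n, ⋃₀ 𝒰 n = Set.univ) ∧
    ∀ x : Y, ∃ U : ℕ → Set Y, (∀ n, U n ∈ 𝒰 n) ∧ (∀ n, x ∈ U n) ∧
      IsCompact (⋂ n, U n) ∧
      ∀ W : Set Y, IsOpen W → (⋂ n, U n) ⊆ W → ∃ m, (⋂ i ≤ m, U i) ⊆ W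

/-- `X` is a Namioka space: for every compact Hausdorff `K`, every separately continuous
`f : X × K → ℝ` is jointly continuous at each point of `R × K` for some dense `R ⊆ X`. -/
def NamiokaSpace (X : Type*) [TopologicalSpace X] : Prop :=
  ∀ (K : Type*) [TopologicalSpace K], CompactSpace K → T2Space K →
    ∀ f : X × K → ℝ, SeparatelyContinuous f →
      ∃ R : Set X, Dense R ∧ ∀ x ∈ R, ∀ y : K, ContinuousAt f (x, y)

/-- `A` is C-embedded in `Y`: every continuous real-valued function on `A` extends
continuously to `Y`. -/
def CEmbedded {Y : Type*} [TopologicalSpace Y] (A : Set Y) : Prop :=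
  ∀ g : A → ℝ, Continuous g → ∃ G : Y → ℝ, Continuous G ∧ ∀ a : A, G a = g a

/-- `A` is C*-embedded in `Y`: every bounded continuous real-valued function on `A`
extends continuously to `Y`. -/
def CStarEmbedded {Y : Type*} [TopologicalSpace Y] (A : Set Y) : Prop :=
  ∀ g : A → ℝ, Continuous g → (∃ M, ∀ a, |g a| ≤ M) →
    ∃ G : Y → ℝ, Continuous G ∧ ∀ a : A, G a = g a

/-- The family `F ⊆ ℝ^X` is equicontinuous at `x`. -/
def EquicontAt (F : Set (X → ℝ)) (x : X) : Prop :=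
  ∀ ε > 0, ∃ U ∈ 𝓝 x, ∀ y ∈ U, ∀ g ∈ F, |g x - g y| < ε

end SepJoint


/-!
Fix `ε > 0` and let `Wε` (`smallOscillationSet f ε`) be the open set of points having a
neighbourhood on which every `f(·, y)` oscillates by at most `ε`. If `Wε` missed a nonempty open
set `V₀`, β could play inside `V₀`, choosing after α's move `(Uₙ, aₙ)` a pair `yₙ, zₙ ∈ K` such
that `gₙ = f(·, yₙ) - f(·, zₙ)` satisfies `|gₙ| ≥ ε/3` on his answer and `|gₙ| < 1/(n+2)` at
`a₀, …, aₙ`: since `K` is pseudocompact, `y ↦ (f(aᵢ, y))ᵢ` has totally bounded range, so `y` only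
has to be compared with finitely many points when shrinking `Uₙ`. The `gₙ` lie in the continuous
image of `K × K` in `C_p(X)`, which is pseudocompact and therefore relatively countably compact,
so they cluster at a continuous `g`. Then `g` vanishes at every `aᵢ` but nowhere on `⋂ Uₙ`, so β
wins, which is impossible. The same game with shrinking dense open sets shows that `X` is a Baire
space, hence `⋂ₙ W_{1/(n+1)}` is a dense Gδ set, and `f` is jointly continuous at each point of
it times `K`.
-/

theorem MapClusterPt.mem_of_eventually_mem {Z ι : Type*} [TopologicalSpace Z] {F : Filter ι}
    {u : ι → Z} {x : Z} {C : Set Z} (h : MapClusterPt x F u) (hC : IsClosed C)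
    (hu : ∀ᶠ n in F, u n ∈ C) : x ∈ C :=
  hC.closure_subset (mem_closure_iff_clusterPt.2 (ClusterPt.mono h (le_principal_iff.2 hu)))

theorem MapClusterPt.eq_of_tendsto {Z ι : Type*} [TopologicalSpace Z] [T2Space Z]
    {F : Filter ι} {u : ι → Z} {x y : Z} (h : MapClusterPt x F u) (hu : Tendsto u F (𝓝 y)) :
    x = y :=
  eq_of_nhds_neBot (ClusterPt.mono h hu)

namespace SepJoint

section Histories

variable {A : Type*}

theorem hist_succ (g : ℕ → A) (n : ℕ) : hist g (n + 1) = hist g n ++ [g n] := by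
  rw [hist, List.ofFn_succ', List.concat_eq_append]
  rfl

theorem length_hist (g : ℕ → A) (n : ℕ) : (hist g n).length = n := by
  simp [hist]

theorem mem_hist (g : ℕ → A) {i n : ℕ} (h : i < n) : g i ∈ hist g n :=
  List.mem_ofFn.mpr ⟨⟨i, h⟩, rfl⟩

end Histories

section Strategies

variable {X : Type*}

def betaStrategyOfStep (V₀ : Set X) (next : List (Set X × X) → Set X × X → Set X) :
    BetaStrategy X :=
  fun L => L.getLast?.elim V₀ (next L)

variable {V₀ : Set X} {next : List (Set X × X) → Set X × X → Set X}

theorem betaStrategyOfStep_hist_zero (g : ℕ → Set X × X) :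
    betaStrategyOfStep V₀ next (hist g 0) = V₀ := by
  simp [betaStrategyOfStep, hist]

theorem betaStrategyOfStep_hist_succ (g : ℕ → Set X × X) (n : ℕ) :
    betaStrategyOfStep V₀ next (hist g (n + 1)) = next (hist g (n + 1)) (g n) := by
  have hlast : (hist g (n + 1)).getLast? = some (g n) := by
    rw [hist_succ, List.getLast?_concat]
  simp only [betaStrategyOfStep, hlast, Option.elim_some]

theorem not_alphaWinsGamma_of_vanishing {Γ : Set (X → ℝ)} {U : ℕ → Set X} {a : ℕ → X}
    {g : X → ℝ} (hg : g ∈ Γ) (hzero : ∀ i, g (a i) = 0) (hne : ∀ t ∈ ⋂ n, U n, g t ≠ 0) :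
    ¬ AlphaWinsGamma Γ U a := fun hwin => by
  obtain ⟨t, ht, hcl⟩ := hwin g hg
  rw [show (fun n => g (a n)) = fun _ => 0 from funext hzero, range_const, closure_singleton] at hcl
  exact hne t ht hcl

variable [TopologicalSpace X]

def ShrinksWithin (V₀ : Set X) (next : List (Set X × X) → Set X × X → Set X) : Prop :=
  ∀ L (p : Set X × X), IsOpen p.1 → p.1.Nonempty → p.1 ⊆ V₀ →
    IsOpen (next L p) ∧ (next L p).Nonempty ∧ next L p ⊆ p.1

theorem subset_of_alphaLegal (hnext : ShrinksWithin V₀ next) {U : ℕ → Set X} {a : ℕ → X}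
    {n : ℕ} (h : AlphaLegal (betaStrategyOfStep V₀ next) U a n) : ∀ i < n, U i ⊆ V₀ := by
  intro i
  induction i with
  | zero =>
    intro hi
    simpa only [betaStrategyOfStep_hist_zero] using (h 0 hi).2.2
  | succ i ih =>
    intro hi
    obtain ⟨hUo, hUne, -⟩ := h i (by omega)
    have hsub := (h (i + 1) hi).2.2
    rw [betaStrategyOfStep_hist_succ] at hsub
    exact hsub.trans ((hnext _ (U i, a i) hUo hUne (ih (by omega))).2.2.trans (ih (by omega)))

theorem betaLegal_betaStrategyOfStep (hV₀ : IsOpen V₀) (hV₀ne : V₀.Nonempty)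
    (hnext : ShrinksWithin V₀ next) : BetaLegal (betaStrategyOfStep V₀ next) := by
  intro U a n h
  cases n with
  | zero =>
    rw [betaStrategyOfStep_hist_zero]
    exact ⟨hV₀, hV₀ne, fun m hm => absurd hm (by omega)⟩
  | succ m =>
    rw [betaStrategyOfStep_hist_succ]
    obtain ⟨hUo, hUne, -⟩ := h m (lt_add_one m)
    obtain ⟨ho, hne, hsub⟩ :=
      hnext _ (U m, a m) hUo hUne (subset_of_alphaLegal hnext h m (lt_add_one m))
    refine ⟨ho, hne, fun k hk => ?_⟩
    obtain rfl : m = k := Nat.succ_inj.1 hk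
    exact hsub

theorem subset_initial_of_play (hnext : ShrinksWithin V₀ next) {U : ℕ → Set X} {a : ℕ → X}
    (hplay : ∀ n, AlphaLegal (betaStrategyOfStep V₀ next) U a n) (n : ℕ) : U n ⊆ V₀ :=
  subset_of_alphaLegal hnext (hplay (n + 1)) n (lt_add_one n)

theorem succ_subset_next_of_play {U : ℕ → Set X} {a : ℕ → X}
    (hplay : ∀ n, AlphaLegal (betaStrategyOfStep V₀ next) U a n) (n : ℕ) :
    U (n + 1) ⊆ next (hist (fun j => (U j, a j)) (n + 1)) (U n, a n) := by
  simpa only [betaStrategyOfStep_hist_succ] using (hplay (n + 2) (n + 1) (lt_add_one _)).2.2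

theorem baireSpace_of_sigmaGammaBetaDefavorable {Γ : Set (X → ℝ)} (hΓ : Γ.Nonempty)
    (hX : SigmaGammaBetaDefavorable X Γ) : BaireSpace X := by
  refine ⟨fun F hFo hFd => dense_iff_inter_open.2 fun O hO hOne => ?_⟩
  by_contra hempty
  have hnext : ShrinksWithin (O ∩ F 0) (fun L p => p.1 ∩ F L.length) := fun L p ho hne _ =>
    ⟨ho.inter (hFo _), (hFd _).inter_open_nonempty _ ho hne, inter_subset_left⟩
  refine hX ⟨_, betaLegal_betaStrategyOfStep (hO.inter (hFo 0))
    ((hFd 0).inter_open_nonempty _ hO hOne) hnext, fun U a hplay hwin => hempty ?_⟩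
  obtain ⟨g, hg⟩ := hΓ
  obtain ⟨t, ht, -⟩ := hwin g hg
  rw [mem_iInter] at ht
  have ht₀ : t ∈ O ∩ F 0 := subset_initial_of_play hnext hplay 0 (ht 0)
  refine ⟨t, ht₀.1, mem_iInter.2 fun n => ?_⟩
  cases n with
  | zero => exact ht₀.2
  | succ n =>
    have htn := succ_subset_next_of_play hplay n (ht (n + 1))
    rw [length_hist] at htn
    exact htn.2

end Strategies

section Boundedness

variable {K : Type*} [TopologicalSpace K]

theorem BoundedIn.univ_of_prod_self (h : BoundedIn (univ : Set (K × K))) :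
    BoundedIn (univ : Set K) := fun g hg =>
  let ⟨M, hM⟩ := h (g ∘ Prod.fst) (hg.comp continuous_fst)
  ⟨M, fun y _ => hM (y, y) trivial⟩

theorem BoundedIn.isBounded_range {E : Type*} [SeminormedAddCommGroup E]
    (hK : BoundedIn (univ : Set K)) {g : K → E} (hg : Continuous g) :
    Bornology.IsBounded (range g) := by
  obtain ⟨M, hM⟩ := hK (‖g ·‖) hg.norm
  refine isBounded_iff_forall_norm_le.2 ⟨M, ?_⟩
  rintro _ ⟨y, rfl⟩
  simpa using hM y trivial

theorem pseudocompact_range {Z Y : Type*} [TopologicalSpace Z] [TopologicalSpace Y]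
    [T35Space Y] (hZ : BoundedIn (univ : Set Z)) {Φ : Z → Y} (hΦ : Continuous Φ) :
    Pseudocompact (range Φ) := by
  refine ⟨inferInstance, fun g hg => ?_⟩
  obtain ⟨M, hM⟩ := hZ (g ∘ rangeFactorization Φ) (hg.comp (hΦ.subtype_mk _))
  refine ⟨M, fun y _ => ?_⟩
  obtain ⟨z, rfl⟩ := rangeFactorization_surjective y
  exact hM z trivial

end Boundedness

theorem exists_finset_forall_exists_dist_lt {K E : Type*} [PseudoMetricSpace E] [ProperSpace E]
    {g : K → E} (hg : Bornology.IsBounded (range g)) {δ : ℝ} (hδ : 0 < δ) :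
    ∃ T : Finset K, ∀ y, ∃ τ ∈ T, dist (g y) (g τ) < δ := by
  classical
  obtain ⟨t, hts, htf, hcov⟩ := Metric.finite_approx_of_totallyBounded
    (hg.isCompact_closure.totallyBounded.subset subset_closure) δ hδ
  obtain ⟨T, -, hT⟩ := Finset.subset_set_image_iff.1
    (show ↑htf.toFinset ⊆ g '' univ by simpa [image_univ] using hts)
  refine ⟨T, fun y => ?_⟩
  obtain ⟨e, he, hye⟩ := mem_iUnion₂.1 (hcov (mem_range_self y))
  obtain ⟨τ, hτ, rfl⟩ := Finset.mem_image.1 (hT ▸ htf.mem_toFinset.2 he)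
  exact ⟨τ, hτ, hye⟩

/-- Since `|q₁ - q₂| < ε/4`, the differences `p₁ - q₁` and `p₂ - q₂` are more than `3ε/4`
apart. -/
theorem lt_abs_sub_or_lt_abs_sub {ε p₁ p₂ q₁ q₂ r : ℝ} (h : ε < |p₁ - p₂|)
    (h₁ : |q₁ - r| < ε / 8) (h₂ : |q₂ - r| < ε / 8) :
    ε / 3 < |p₁ - q₁| ∨ ε / 3 < |p₂ - q₂| := by
  by_contra! hle
  obtain ⟨hle₁, hle₂⟩ := hle
  rw [abs_lt] at h₁ h₂
  rw [abs_le] at hle₁ hle₂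
  rcases lt_abs.1 h with h | h <;> linarith

section Oscillation

variable {X K : Type*} [TopologicalSpace X]

def smallOscillationSet (f : X × K → ℝ) (ε : ℝ) : Set X :=
  {x | ∃ U, IsOpen U ∧ x ∈ U ∧ ∀ x₁ ∈ U, ∀ x₂ ∈ U, ∀ y, |f (x₁, y) - f (x₂, y)| ≤ ε}

theorem isOpen_smallOscillationSet (f : X × K → ℝ) (ε : ℝ) :
    IsOpen (smallOscillationSet f ε) := by
  rw [isOpen_iff_forall_mem_open]
  rintro x ⟨U, hUo, hxU, hU⟩
  exact ⟨U, fun x' hx' => ⟨U, hUo, hx', hU⟩, hUo, hxU⟩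

theorem nonempty_of_notMem_smallOscillationSet {f : X × K → ℝ} {ε : ℝ} {x : X}
    (hx : x ∉ smallOscillationSet f ε) : Nonempty K := by
  by_contra hK
  exact hx ⟨univ, isOpen_univ, trivial, fun _ _ _ _ y => (hK ⟨y⟩).elim⟩

variable [TopologicalSpace K]

theorem continuousAt_of_forall_mem_smallOscillationSet {f : X × K → ℝ}
    (hf : ∀ x, Continuous fun y => f (x, y)) {x : X}
    (hx : ∀ n : ℕ, x ∈ smallOscillationSet f (1 / (n + 1))) (y : K) : ContinuousAt f (x, y) := by
  rw [ContinuousAt, Metric.tendsto_nhds]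
  intro ε hε
  obtain ⟨n, hn⟩ := exists_nat_one_div_lt (half_pos hε)
  obtain ⟨U, hUo, hxU, hU⟩ := hx n
  have hy := Metric.tendsto_nhds.1 ((hf x).tendsto y) _ (half_pos hε)
  filter_upwards [prod_mem_nhds (hUo.mem_nhds hxU) hy] with ⟨x', y'⟩ ⟨hx', hy'⟩
  calc dist (f (x', y')) (f (x, y))
      ≤ dist (f (x', y')) (f (x, y')) + dist (f (x, y')) (f (x, y)) := dist_triangle _ _ _
    _ < ε / 2 + ε / 2 := add_lt_add_of_le_of_lt ((hU x' hx' x hxU y').trans hn.le) hy'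
    _ = ε := add_halves ε

theorem exists_isOpen_le_abs_sub_of_notMem_smallOscillationSet {f : X × K → ℝ}
    (hK : BoundedIn (univ : Set K)) (hf : SeparatelyContinuous f) {ε δ : ℝ} (hε : 0 < ε)
    (hδ : 0 < δ) {U : Set X} (hUo : IsOpen U) {x₀ : X} (hx₀U : x₀ ∈ U)
    (hx₀ : x₀ ∉ smallOscillationSet f ε) (A : Finset X) :
    ∃ (V : Set X) (y z : K), IsOpen V ∧ V.Nonempty ∧ V ⊆ U ∧
      (∀ x ∈ V, ε / 3 ≤ |f (x, y) - f (x, z)|) ∧ ∀ b ∈ A, |f (b, y) - f (b, z)| < δ := by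
  obtain ⟨T, hT⟩ := exists_finset_forall_exists_dist_lt
    (hK.isBounded_range (g := fun y (b : A) => f (b, y)) (continuous_pi fun b => hf.1 b)) hδ
  set U' := U ∩ ⋂ τ ∈ T, {x | |f (x, τ) - f (x₀, τ)| < ε / 8}
  have hU'o : IsOpen U' := hUo.inter (isOpen_biInter_finset fun τ _ =>
    isOpen_lt ((hf.2 τ).sub continuous_const).abs continuous_const)
  have hx₀U' : x₀ ∈ U' := ⟨hx₀U, mem_iInter₂.2 fun τ _ => by simpa using by positivity⟩
  obtain ⟨x₁, hx₁, x₂, hx₂, y, hy⟩ :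
      ∃ x₁ ∈ U', ∃ x₂ ∈ U', ∃ y, ε < |f (x₁, y) - f (x₂, y)| := by
    by_contra! h
    exact hx₀ ⟨U', hU'o, hx₀U', h⟩
  obtain ⟨τ, hτT, hτ⟩ := hT y
  have hlarge :=
    lt_abs_sub_or_lt_abs_sub hy (mem_iInter₂.1 hx₁.2 τ hτT) (mem_iInter₂.1 hx₂.2 τ hτT)
  refine ⟨U ∩ {x | ε / 3 < |f (x, y) - f (x, τ)|}, y, τ,
    hUo.inter (isOpen_lt continuous_const ((hf.2 y).sub (hf.2 τ)).abs), ?_, inter_subset_left,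
    fun x hx => hx.2.le, fun b hb => ?_⟩
  · rcases hlarge with h | h
    exacts [⟨x₁, hx₁.1, h⟩, ⟨x₂, hx₂.1, h⟩]
  · simpa only [Real.dist_eq] using (dist_pi_lt_iff hδ).1 hτ ⟨b, hb⟩

theorem not_alphaWinsGamma_of_sub_tendsto_zero {f : X × K → ℝ}
    (hK2 : BoundedIn (univ : Set (K × K)))
    (hcc : ∀ Y : Set {g : X → ℝ // Continuous g}, Pseudocompact Y → RelCountablyCompact Y)
    (hf : SeparatelyContinuous f) {U : ℕ → Set X} {a : ℕ → X} {y z : ℕ → K} {c : ℝ}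
    (hc : 0 < c) (hlarge : ∀ t ∈ ⋂ n, U n, ∀ᶠ n in atTop, c ≤ |f (t, y n) - f (t, z n)|)
    (hsmall : ∀ i, Tendsto (fun n => f (a i, y n) - f (a i, z n)) atTop (𝓝 0)) :
    ¬ AlphaWinsGamma {g : X → ℝ | Continuous g} U a := by
  let Φ : K × K → {g : X → ℝ // Continuous g} :=
    fun w => ⟨fun x => f (x, w.1) - f (x, w.2), (hf.2 w.1).sub (hf.2 w.2)⟩
  have hΦ : Continuous Φ := (continuous_pi fun x =>
    ((hf.1 x).comp continuous_fst).sub ((hf.1 x).comp continuous_snd)).subtype_mk _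
  obtain ⟨g, hg⟩ :=
    hcc _ (pseudocompact_range hK2 hΦ) (fun n => Φ (y n, z n)) fun n => mem_range_self _
  have hgx (x : X) : MapClusterPt (g.1 x) atTop fun n => f (x, y n) - f (x, z n) :=
    hg.continuousAt_comp ((continuous_apply x).comp continuous_subtype_val).continuousAt
  refine not_alphaWinsGamma_of_vanishing g.2 (fun i => (hgx (a i)).eq_of_tendsto (hsmall i))
    fun t ht hzero => ?_
  have hgt : c ≤ |g.1 t| :=
    (hgx t).mem_of_eventually_mem (isClosed_le continuous_const continuous_abs) (hlarge t ht)
  rw [hzero, abs_zero] at hgt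
  linarith

theorem exists_betaWinningGamma_of_disjoint_smallOscillationSet {f : X × K → ℝ}
    (hK2 : BoundedIn (univ : Set (K × K)))
    (hcc : ∀ Y : Set {g : X → ℝ // Continuous g}, Pseudocompact Y → RelCountablyCompact Y)
    (hf : SeparatelyContinuous f) {ε : ℝ} (hε : 0 < ε) {V₀ : Set X} (hV₀o : IsOpen V₀)
    (hV₀ne : V₀.Nonempty) (hV₀ : Disjoint V₀ (smallOscillationSet f ε)) :
    ∃ σ : BetaStrategy X, BetaWinningGamma {g : X → ℝ | Continuous g} σ := by
  classical
  have := nonempty_of_notMem_smallOscillationSet (hV₀.notMem_of_mem_left hV₀ne.some_mem)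
  have step (n : ℕ) (U : Set X) (A : Finset X) : ∃ (V : Set X) (y z : K),
      IsOpen U → U.Nonempty → U ⊆ V₀ → IsOpen V ∧ V.Nonempty ∧ V ⊆ U ∧
        (∀ x ∈ V, ε / 3 ≤ |f (x, y) - f (x, z)|) ∧
        ∀ b ∈ A, |f (b, y) - f (b, z)| < 1 / ((n : ℝ) + 1) := by
    by_cases hU : IsOpen U ∧ U.Nonempty ∧ U ⊆ V₀
    · obtain ⟨x, hx⟩ := hU.2.1
      obtain ⟨V, y, z, hV⟩ := exists_isOpen_le_abs_sub_of_notMem_smallOscillationSet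
        hK2.univ_of_prod_self hf hε Nat.one_div_pos_of_nat hU.1 hx
        (hV₀.notMem_of_mem_left (hU.2.2 hx)) A
      exact ⟨V, y, z, fun _ _ _ => hV⟩
    · exact ⟨∅, Classical.arbitrary K, Classical.arbitrary K,
        fun h₁ h₂ h₃ => (hU ⟨h₁, h₂, h₃⟩).elim⟩
  choose V y z hV using step
  let next (L : List (Set X × X)) (p : Set X × X) := V L.length p.1 (L.map Prod.snd).toFinset
  have hnext : ShrinksWithin V₀ next := fun L p ho hne hsub =>
    let h := hV _ _ _ ho hne hsub
    ⟨h.1, h.2.1, h.2.2.1⟩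
  refine ⟨_, betaLegal_betaStrategyOfStep hV₀o hV₀ne hnext, fun U a hplay => ?_⟩
  set L := fun n => hist (fun j => (U j, a j)) (n + 1)
  have hVn (n : ℕ) := hV (L n).length (U n) ((L n).map Prod.snd).toFinset
    (hplay (n + 1) n (lt_add_one n)).1 (hplay (n + 1) n (lt_add_one n)).2.1
    (subset_initial_of_play hnext hplay n)
  refine not_alphaWinsGamma_of_sub_tendsto_zero hK2 hcc hf (div_pos hε three_pos)
    (fun t ht => Eventually.of_forall fun n =>
      (hVn n).2.2.2.1 t (succ_subset_next_of_play hplay n (mem_iInter.1 ht (n + 1))))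
    (fun i => squeeze_zero_norm' ?_ tendsto_one_div_add_atTop_nhds_zero_nat)
  filter_upwards [eventually_ge_atTop i] with n hin
  have hai : a i ∈ ((L n).map Prod.snd).toFinset :=
    List.mem_toFinset.2 (List.mem_map.2 ⟨_, mem_hist _ (Nat.lt_succ_of_le hin), rfl⟩)
  have hlen : ((L n).length : ℝ) = n + 1 := by simp [L, length_hist]
  calc ‖f (a i, _) - f (a i, _)‖ ≤ 1 / (((L n).length : ℝ) + 1) := ((hVn n).2.2.2.2 _ hai).le
    _ ≤ 1 / ((n : ℝ) + 1) := by rw [hlen]; gcongr; linarith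

theorem dense_smallOscillationSet {f : X × K → ℝ}
    (hX : SigmaGammaBetaDefavorable X {g : X → ℝ | Continuous g})
    (hK2 : BoundedIn (univ : Set (K × K)))
    (hcc : ∀ Y : Set {g : X → ℝ // Continuous g}, Pseudocompact Y → RelCountablyCompact Y)
    (hf : SeparatelyContinuous f) {ε : ℝ} (hε : 0 < ε) : Dense (smallOscillationSet f ε) :=
  dense_iff_inter_open.2 fun _ hV₀o hV₀ne => not_disjoint_iff_nonempty_inter.1 fun hV₀ =>
    hX (exists_betaWinningGamma_of_disjoint_smallOscillationSet hK2 hcc hf hε hV₀o hV₀ne hV₀)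

end Oscillation

end SepJoint

open SepJoint in
/-- Corollary 3.3 (2): `X` σ_{C(X)}-β-defavorable, `K × K` pseudocompact, and
every pseudocompact subspace of `C_p(X)` relatively countably compact in `C_p(X)`; then `f`
is jointly continuous at each point of `R × K` for some dense Gδ set `R ⊆ X`. -/
theorem denseGdelta_joint_continuity_of_square_pseudocompact
    {X K : Type*} [TopologicalSpace X] [TopologicalSpace K]
    (hX : SigmaGammaBetaDefavorable X {g : X → ℝ | Continuous g})
    (hKK : Pseudocompact (K × K))
    (hcc : ∀ Y : Set {g : X → ℝ // Continuous g}, Pseudocompact Y → RelCountablyCompact Y)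
    (f : X × K → ℝ) (hf : SeparatelyContinuous f) :
    ∃ R : Set X, Dense R ∧ IsGδ R ∧ ∀ x ∈ R, ∀ y : K, ContinuousAt f (x, y) := by
  have := baireSpace_of_sigmaGammaBetaDefavorable ⟨fun _ => 0, continuous_const⟩ hX
  have hopen (n : ℕ) := isOpen_smallOscillationSet f (1 / ((n : ℝ) + 1))
  refine ⟨⋂ n : ℕ, smallOscillationSet f (1 / ((n : ℝ) + 1)),
    dense_iInter_of_isOpen hopen fun n =>
      dense_smallOscillationSet hX hKK.2 hcc hf Nat.one_div_pos_of_nat,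
    .iInter_of_isOpen hopen, fun x hx y => ?_⟩
  exact continuousAt_of_forall_mem_smallOscillationSet hf.1 (mem_iInter.1 hx) y
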